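/- arXiv:2408.09403 — 4 statements merged into one kernel-verified Lean document; each statement's English description precedes it below -/
import Mathlib

section
/- For the QRNN step h_k = s·clip(⌊(W_ih·x_k + b_ih + W_hh·h_{k-1} + b_hh)/s⌉, 0, n) and the RBIF conversion formula X_k(T) = λ·clip(⌊(W_ih·X_k^{l-1}(T) + W_hh·X_{k-1}(T) + V₀)/λ⌋, 0, S_max), if λ = s, S_max = n, V₀ = 0.5·s + b_ih + b_hh, X_k^{l-1}(T) = x_k, and X_{k-1}(T) = h_{k-1}, then X_k(T) = h_k. -/
theorem qrnn_rbif_step_equal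
    (Wih Whh xk hkm1 bih bhh s : ℝ) (hs : 0 < s) (n : ℤ) (hn : 0 ≤ n) :
    s * ((max 0 (min ⌊(Wih * xk + Whh * hkm1 + (0.5 * s + bih + bhh)) / s⌋ n) : ℤ) : ℝ)
      = s * ((max 0 (min ⌊(Wih * xk + bih + Whh * hkm1 + bhh) / s + 1 / 2⌋ n) : ℤ) : ℝ) := by
  have h : (Wih * xk + Whh * hkm1 + (0.5 * s + bih + bhh)) / s
      = (Wih * xk + bih + Whh * hkm1 + bhh) / s + 1 / 2 := by
    field_simp
    ring
  rw [h]
end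

section
/- By induction on k: if for every sequence index k the RBIF accumulated output satisfies X_k(T) = λ·clip(⌊(W_ih·x_k + W_hh·X_{k-1}(T) + V₀)/λ⌋, 0, n) with X_0(T) = h_0, λ = s, V₀ = 0.5·s + b_ih + b_hh, and the QRNN satisfies h_k = s·clip(⌊(W_ih·x_k + b_ih + W_hh·h_{k-1} + b_hh)/s⌉, 0, n) with the same initial condition, then X_k(T) = h_k for all k ≥ 0. -/
theorem qrnn_rbif_induction
    (x h X : ℕ → ℝ) (Wih Whh bih bhh s : ℝ) (hs : 0 < s) (n : ℤ) (hn : 0 ≤ n)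
    (hinit : X 0 = h 0)
    (hX : ∀ k, 1 ≤ k →
      X k = s * ((max 0 (min ⌊(Wih * x k + Whh * X (k - 1)
        + (0.5 * s + bih + bhh)) / s⌋ n) : ℤ) : ℝ))
    (hh : ∀ k, 1 ≤ k →
      h k = s * ((max 0 (min ⌊(Wih * x k + bih + Whh * h (k - 1) + bhh) / s
        + 1 / 2⌋ n) : ℤ) : ℝ)) :
    ∀ k, X k = h k := by
  intro k
  induction k with
  | zero => exact hinit
  | succ m ih =>
    rw [hX (m+1) (Nat.le_add_left 1 m), hh (m+1) (Nat.le_add_left 1 m)]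
    simp only [Nat.add_sub_cancel, ih]
    congr 3
    field_simp
    ring
end

section
/- For a single BIF neuron with s-analog encoding (charge X at t=1 only), threshold λ > 0, initial potential V(0) = λ/2, and spike cap S_max, the eventually-constant value of the spike tracer equals clip(⌊X/λ + 1/2⌋, 0, S_max); i.e., the accumulated spike count exactly computes the quantized ReLU of the input. -/
theorem s_analog_bif_computes_quantized_relu
    (lam X : ℝ) (hlam : 0 < lam) (Smax : ℕ)
    (H V : ℕ → ℝ) (s S : ℕ → ℤ)
    (hH1 : H 1 = lam / 2 + X)
    (hH : ∀ t, 2 ≤ t → H t = V (t - 1))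
    (hfire : ∀ t, 1 ≤ t →
      s t = if lam ≤ H t ∧ S (t - 1) < (Smax : ℤ) then 1
        else if H t < 0 ∧ 0 < S (t - 1) then -1 else 0)
    (hVdyn : ∀ t, 1 ≤ t → V t = H t - lam * (s t : ℝ))
    (hS0 : S 0 = 0) (hS : ∀ t, 1 ≤ t → S t = S (t - 1) + s t) :
    ∃ T₀, ∀ T, T₀ ≤ T → S T = max 0 (min ⌊X / lam + 1 / 2⌋ (Smax : ℤ)) := by
  set k : ℤ := ⌊X / lam + 1 / 2⌋ with hk
  set N : ℤ := max 0 (min k (Smax : ℤ)) with hN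
  -- potential formula
  have hHform : ∀ n : ℕ, H (n + 1) = lam / 2 + X - lam * (S n : ℝ) := by
    intro n
    induction n with
    | zero => simp [hH1, hS0]
    | succ m ih =>
      have h1 : H (m + 2) = V (m + 1) := by
        have := hH (m + 2) (by omega)
        simpa using this
      have h2 : V (m + 1) = H (m + 1) - lam * (s (m + 1) : ℝ) :=
        hVdyn (m + 1) (by omega)
      have h3 : S (m + 1) = S m + s (m + 1) := by
        have := hS (m + 1) (by omega)
        simpa using this
      rw [show m + 1 + 1 = m + 2 from rfl, h1, h2, ih, h3]
      push_cast
      ring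
  -- firing characterization
  have key1 : ∀ m : ℤ, (lam ≤ lam / 2 + X - lam * (m : ℝ)) ↔ (m + 1 ≤ k) := by
    intro m
    rw [hk, Int.le_floor]
    push_cast
    constructor
    · intro h
      rw [← sub_le_iff_le_add, le_div_iff₀ hlam]
      nlinarith
    · intro h
      rw [← sub_le_iff_le_add, le_div_iff₀ hlam] at h
      nlinarith
  have key2 : ∀ m : ℤ, (lam / 2 + X - lam * (m : ℝ) < 0) ↔ (k < m) := by
    intro m
    rw [hk, Int.floor_lt]
    push_cast
    constructor
    · intro h
      rw [← lt_sub_iff_add_lt, div_lt_iff₀ hlam]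
      nlinarith
    · intro h
      rw [← lt_sub_iff_add_lt, div_lt_iff₀ hlam] at h
      nlinarith
  have hsfire : ∀ n : ℕ, s (n + 1) =
      if S n + 1 ≤ k ∧ S n < (Smax : ℤ) then 1
      else if k < S n ∧ 0 < S n then -1 else 0 := by
    intro n
    have := hfire (n + 1) (by omega)
    simp only [Nat.add_sub_cancel] at this
    rw [this, hHform n]
    simp only [key1, key2]
  -- main invariant
  have hmain : ∀ n : ℕ, S n = min N (n : ℤ) := by
    intro n
    induction n with
    | zero =>
      simp [hS0, hN]
    | succ m ih =>
      have h3 : S (m + 1) = S m + s (m + 1) := by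
        have := hS (m + 1) (by omega)
        simpa using this
      rw [hsfire m] at h3
      push_cast
      split_ifs at h3 with h1 h2 <;> omega
  refine ⟨N.toNat, fun T hT => ?_⟩
  have := hmain T
  have : S T = min N (T : ℤ) := this
  have hT' : N ≤ (T : ℤ) := by omega
  rw [this, min_eq_left hT', hN]
end

section
/- Error propagation bound for the quantized RNN recursion: if h_k = s·clip(⌊(W_ih·x_k + W_hh·h_{k-1} + β)/s⌉, 0, n) and ĥ_k follows the same recursion with perturbed initial state ĥ_0, then for each step k, |h_k - ĥ_k| ≤ |W_hh|·|h_{k-1} - ĥ_{k-1}| + s. -/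
lemma clip_lip (x y N : ℤ) : |max 0 (min x N) - max 0 (min y N)| ≤ |x - y| := by
  rcases abs_cases (x - y) with ⟨h1, h2⟩ | ⟨h1, h2⟩ <;> rw [abs_sub_le_iff, h1] <;>
    constructor <;> omega

lemma floor_lip (x y : ℝ) : |((⌊x⌋ : ℝ)) - ⌊y⌋| ≤ |x - y| + 1 := by
  rw [abs_sub_le_iff]
  have h1 := Int.floor_le x
  have h2 := Int.lt_floor_add_one x
  have h3 := Int.floor_le y
  have h4 := Int.lt_floor_add_one y
  have h5 := neg_abs_le (x - y)
  have h6 := le_abs_self (x - y)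
  constructor <;> linarith

theorem qrnn_one_step_error_bound
    (Wih Whh beta s : ℝ) (hs : 0 < s) (n : ℕ) (xk hkm1 hkm1' hk hk' : ℝ)
    (hhk : hk = s * ((max 0 (min ⌊(Wih * xk + Whh * hkm1 + beta) / s + 1 / 2⌋ (n : ℤ)) : ℤ) : ℝ))
    (hhk' : hk' = s * ((max 0 (min ⌊(Wih * xk + Whh * hkm1' + beta) / s + 1 / 2⌋ (n : ℤ)) : ℤ) : ℝ)) :
    |hk - hk'| ≤ |Whh| * |hkm1 - hkm1'| + s := by
  set a := (Wih * xk + Whh * hkm1 + beta) / s with ha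
  set a' := (Wih * xk + Whh * hkm1' + beta) / s with ha'
  set m : ℤ := max 0 (min ⌊a + 1/2⌋ (n : ℤ)) with hm
  set m' : ℤ := max 0 (min ⌊a' + 1/2⌋ (n : ℤ)) with hm'
  have hlip : |((m : ℝ)) - m'| ≤ |a - a'| + 1 := by
    have h1 : |m - m'| ≤ |⌊a + 1/2⌋ - ⌊a' + 1/2⌋| := clip_lip _ _ _
    have h1' : |((m : ℝ)) - m'| ≤ |((⌊a + 1/2⌋ : ℝ)) - ⌊a' + 1/2⌋| := by
      push_cast [← Int.cast_sub, ← Int.cast_abs]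
      exact_mod_cast h1
    refine h1'.trans ?_
    have := floor_lip (a + 1/2) (a' + 1/2)
    simpa using this
  have haa' : a - a' = Whh * (hkm1 - hkm1') / s := by
    field_simp [ha, ha']
    rw [ha, ha', sub_mul, div_mul_cancel₀ _ hs.ne', div_mul_cancel₀ _ hs.ne']; ring
  have hsabs : s * |a - a'| = |Whh| * |hkm1 - hkm1'| := by
    rw [haa', abs_div, abs_of_pos hs, abs_mul]
    field_simp
  calc |hk - hk'| = s * |((m : ℝ)) - m'| := by
        rw [hhk, hhk', ← mul_sub, abs_mul, abs_of_pos hs]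
    _ ≤ s * (|a - a'| + 1) := by
        exact mul_le_mul_of_nonneg_left hlip hs.le
    _ = |Whh| * |hkm1 - hkm1'| + s := by rw [mul_add, hsabs, mul_one]
end
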